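/- arXiv:2305.18590 — 2 statements merged into one kernel-verified Lean document; each statement's English description precedes it below -/
import Mathlib

section
/- Let d_N denote the Kobayashi distance on 𝔹^N given by d_N(z,w) = arccosh(√(|1-⟨z,w⟩|²/((1-‖z‖²)(1-‖w‖²)))). Suppose f : 𝔹^m → 𝔹^M satisfies: (i) d_M(f(z),f(w)) ≤ d_m(z,w) for all z,w ∈ 𝔹^m, and (ii) there is C > 0 with 1 - ‖f(z)‖ ≤ C(1-‖z‖) for all z ∈ 𝔹^m. Then for every unit vector v ∈ ∂𝔹^m, the curve t ↦ f(tanh(t)v), t ∈ [0,∞), is a (1,β)-quasi-geodesic for d_M, where β = (1/2)log(2C) + d_M(0, f(0)). -/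
/-!
Writing `‖z‖ = tanh A` and `‖w‖ = tanh B`, the distance becomes
`arcosh (|1 - ⟪z, w⟫| cosh A cosh B)`, and `|1 - ⟪z, w⟫| ≥ 1 - tanh A tanh B` gives
`d(z, w) ≥ |A - B| = |d(0, z) - d(0, w)|`, with equality on a radius `u ↦ tanh u • v`.
The upper bound is then the distance-decreasing property on that geodesic. For the lower
bound, `d(0, f(tanh s • v)) ≤ d(0, f 0) + s`, while `exp (-2ρ) ≤ 1 - tanh ρ ≤ 2 exp (-2ρ)`
turns `1 - ‖f z‖ ≤ C (1 - ‖z‖)` into `d(0, f(tanh t • v)) ≥ t - log (2C) / 2`.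
-/

noncomputable section

/-- The inverse hyperbolic cosine (not in Mathlib). -/
def arccosh (x : ℝ) : ℝ := Real.log (x + Real.sqrt (x ^ 2 - 1))

/-- The Kobayashi (complex hyperbolic) distance on the unit ball, explicit formula. -/
def kobDist (N : ℕ) (z w : EuclideanSpace ℂ (Fin N)) : ℝ :=
  arccosh (Real.sqrt
    (‖1 - (inner ℂ z w : ℂ)‖ ^ 2 / ((1 - ‖z‖ ^ 2) * (1 - ‖w‖ ^ 2))))

open Real

lemma arccosh_eq_arcosh : arccosh = Real.arcosh := rfl

lemma cosh_sub_eq_one_sub_tanh_mul_tanh_mul (A B : ℝ) :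
    cosh (A - B) = (1 - tanh A * tanh B) * (cosh A * cosh B) := by
  have hA := (cosh_pos A).ne'
  have hB := (cosh_pos B).ne'
  rw [cosh_sub, tanh_eq_sinh_div_cosh, tanh_eq_sinh_div_cosh]
  field_simp

lemma one_sub_tanh_sq (A : ℝ) : 1 - tanh A ^ 2 = (cosh A ^ 2)⁻¹ := by
  have hA := (cosh_pos A).ne'
  rw [tanh_eq_sinh_div_cosh]
  field_simp
  linarith [cosh_sq A]

lemma one_sub_tanh (x : ℝ) : 1 - tanh x = 2 / (exp (2 * x) + 1) := by
  have h := exp_pos x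
  rw [tanh_eq, exp_neg, show 2 * x = x + x by ring, exp_add]
  field_simp
  ring

lemma exp_neg_two_mul_le_one_sub_tanh {x : ℝ} (hx : 0 ≤ x) : exp (-(2 * x)) ≤ 1 - tanh x := by
  have h1 : 1 ≤ exp (2 * x) := one_le_exp (by linarith)
  rw [one_sub_tanh, exp_neg, inv_eq_one_div, div_le_div_iff₀ (exp_pos _) (by positivity)]
  linarith

lemma one_sub_tanh_le (x : ℝ) : 1 - tanh x ≤ 2 * exp (-(2 * x)) := by
  rw [one_sub_tanh, exp_neg, ← div_eq_mul_inv]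
  exact div_le_div_of_nonneg_left zero_le_two (exp_pos _) (by linarith)

section Kobayashi

variable {N : ℕ}

lemma kobDist_comm (z w : EuclideanSpace ℂ (Fin N)) : kobDist N z w = kobDist N w z := by
  rw [kobDist, kobDist, ← inner_conj_symm, ← map_one (starRingEnd ℂ), ← map_sub,
    Complex.norm_conj, map_one, mul_comm (1 - ‖z‖ ^ 2)]

lemma kobDist_eq_arcosh {z w : EuclideanSpace ℂ (Fin N)} {A B : ℝ}
    (hz : ‖z‖ ^ 2 = tanh A ^ 2) (hw : ‖w‖ ^ 2 = tanh B ^ 2) :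
    kobDist N z w = arcosh (‖1 - (inner ℂ z w : ℂ)‖ * (cosh A * cosh B)) := by
  have hA := cosh_pos A
  have hB := cosh_pos B
  rw [kobDist, arccosh_eq_arcosh, hz, hw, one_sub_tanh_sq, one_sub_tanh_sq,
    ← Real.sqrt_sq (by positivity : 0 ≤ ‖1 - (inner ℂ z w : ℂ)‖ * (cosh A * cosh B))]
  congr 2
  field_simp

lemma kobDist_tanh_smul {v : EuclideanSpace ℂ (Fin N)} (hv : ‖v‖ = 1) (s t : ℝ) :
    kobDist N (tanh s • v) (tanh t • v) = |s - t| := by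
  have hnorm (u : ℝ) : ‖tanh u • v‖ ^ 2 = tanh u ^ 2 := by
    rw [norm_smul, hv, mul_one, Real.norm_eq_abs, sq_abs]
  have hinner : (inner ℂ (tanh s • v) (tanh t • v) : ℂ) = ((tanh s * tanh t : ℝ) : ℂ) := by
    rw [← Complex.coe_smul, ← Complex.coe_smul, inner_smul_left, inner_smul_right,
      Complex.conj_ofReal, inner_self_eq_norm_sq_to_K, hv]
    push_cast
    ring
  have hpos : 0 < 1 - tanh s * tanh t := by
    nlinarith [abs_mul (tanh s) (tanh t), abs_tanh_lt_one s, abs_tanh_lt_one t,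
      le_abs_self (tanh s * tanh t), abs_nonneg (tanh s)]
  rw [kobDist_eq_arcosh (hnorm s) (hnorm t), hinner, ← Complex.ofReal_one, ← Complex.ofReal_sub,
    Complex.norm_real, Real.norm_of_nonneg hpos.le, ← cosh_sub_eq_one_sub_tanh_mul_tanh_mul,
    ← cosh_abs, arcosh_cosh (abs_nonneg _)]

lemma abs_sub_le_kobDist {z w : EuclideanSpace ℂ (Fin N)} {A B : ℝ}
    (hz : ‖z‖ = tanh A) (hw : ‖w‖ = tanh B) : |A - B| ≤ kobDist N z w := by
  have hcosh : 0 < cosh A * cosh B := mul_pos (cosh_pos A) (cosh_pos B)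
  have hinner : 1 - tanh A * tanh B ≤ ‖1 - (inner ℂ z w : ℂ)‖ := by
    have := norm_inner_le_norm (𝕜 := ℂ) z w
    have := norm_sub_norm_le (1 : ℂ) (inner ℂ z w)
    rw [norm_one] at this
    rw [← hz, ← hw]
    linarith
  have hle : cosh (A - B) ≤ ‖1 - (inner ℂ z w : ℂ)‖ * (cosh A * cosh B) := by
    rw [cosh_sub_eq_one_sub_tanh_mul_tanh_mul]
    exact mul_le_mul_of_nonneg_right hinner hcosh.le
  rw [kobDist_eq_arcosh (congrArg (· ^ 2) hz) (congrArg (· ^ 2) hw), ← arcosh_cosh (abs_nonneg _),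
    cosh_abs]
  exact (arcosh_le_arcosh (cosh_pos _) ((cosh_pos _).trans_le hle)).2 hle

lemma kobDist_zero_left {w : EuclideanSpace ℂ (Fin N)} (hw : ‖w‖ < 1) :
    kobDist N 0 w = artanh ‖w‖ := by
  have hmem : ‖w‖ ∈ Set.Ioo (-1) 1 := ⟨by linarith [norm_nonneg w], hw⟩
  rw [kobDist_eq_arcosh (A := 0) (B := artanh ‖w‖) (by simp) (by rw [tanh_artanh hmem]),
    inner_zero_left, sub_zero, norm_one, cosh_zero, one_mul, one_mul,
    arcosh_cosh (artanh_nonneg (norm_nonneg w))]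

lemma abs_sub_kobDist_zero_le_kobDist {z w : EuclideanSpace ℂ (Fin N)} (hz : ‖z‖ < 1)
    (hw : ‖w‖ < 1) : |kobDist N 0 z - kobDist N 0 w| ≤ kobDist N z w := by
  rw [kobDist_zero_left hz, kobDist_zero_left hw]
  exact abs_sub_le_kobDist (tanh_artanh ⟨by linarith [norm_nonneg z], hz⟩).symm
    (tanh_artanh ⟨by linarith [norm_nonneg w], hw⟩).symm

lemma sub_half_log_le_kobDist_zero {w : EuclideanSpace ℂ (Fin N)} (hw : ‖w‖ < 1) {C t : ℝ}
    (hC : 0 < C) (hclose : 1 - ‖w‖ ≤ C * (1 - tanh t)) :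
    t - (1 / 2) * log (2 * C) ≤ kobDist N 0 w := by
  rw [kobDist_zero_left hw]
  have htanh : tanh (artanh ‖w‖) = ‖w‖ := tanh_artanh ⟨by linarith [norm_nonneg w], hw⟩
  have hexp : exp (-(2 * artanh ‖w‖)) ≤ exp (log (2 * C) - 2 * t) := by
    calc exp (-(2 * artanh ‖w‖)) ≤ 1 - tanh (artanh ‖w‖) :=
          exp_neg_two_mul_le_one_sub_tanh (artanh_nonneg (norm_nonneg w))
      _ ≤ C * (1 - tanh t) := by rwa [htanh]
      _ ≤ C * (2 * exp (-(2 * t))) := mul_le_mul_of_nonneg_left (one_sub_tanh_le t) hC.le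
      _ = exp (log (2 * C) - 2 * t) := by
        rw [exp_sub, exp_log (by positivity), exp_neg]; field_simp
  linarith [exp_le_exp.1 hexp]

lemma sub_sub_abs_le_kobDist {γ : ℝ → EuclideanSpace ℂ (Fin N)} {c : ℝ} (hball : ∀ u, ‖γ u‖ < 1)
    (hlip : ∀ s t, kobDist N (γ s) (γ t) ≤ |s - t|) (hescape : ∀ t, t - c ≤ kobDist N 0 (γ t))
    (s t : ℝ) : t - |s| - (c + kobDist N 0 (γ 0)) ≤ kobDist N (γ s) (γ t) := by
  have hnear := abs_sub_kobDist_zero_le_kobDist (hball 0) (hball s)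
  have hfar := abs_sub_kobDist_zero_le_kobDist (hball s) (hball t)
  have hlip0 := hlip 0 s
  rw [zero_sub, abs_neg] at hlip0
  linarith [abs_le.1 hnear, abs_le.1 hfar, hescape t]

end Kobayashi

theorem stmt_6 (m M : ℕ) (f : EuclideanSpace ℂ (Fin m) → EuclideanSpace ℂ (Fin M))
    (hmap : Set.MapsTo f (Metric.ball 0 1) (Metric.ball 0 1))
    (hnonincr : ∀ z ∈ Metric.ball (0 : EuclideanSpace ℂ (Fin m)) 1,
      ∀ w ∈ Metric.ball (0 : EuclideanSpace ℂ (Fin m)) 1,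
        kobDist M (f z) (f w) ≤ kobDist m z w)
    (C : ℝ) (hC : 0 < C)
    (hbdry : ∀ z ∈ Metric.ball (0 : EuclideanSpace ℂ (Fin m)) 1,
      1 - ‖f z‖ ≤ C * (1 - ‖z‖)) :
    ∀ v : EuclideanSpace ℂ (Fin m), ‖v‖ = 1 →
      ∀ s t : ℝ, 0 ≤ s → 0 ≤ t →
        |t - s| - ((1/2) * Real.log (2 * C) + kobDist M 0 (f 0)) ≤
          kobDist M (f (Real.tanh s • v)) (f (Real.tanh t • v)) ∧
        kobDist M (f (Real.tanh s • v)) (f (Real.tanh t • v)) ≤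
          |t - s| + ((1/2) * Real.log (2 * C) + kobDist M 0 (f 0)) := by
  intro v hv s t hs ht
  have hnorm (u : ℝ) : ‖tanh u • v‖ = |tanh u| := by rw [norm_smul, hv, mul_one, Real.norm_eq_abs]
  have hball (u : ℝ) : tanh u • v ∈ Metric.ball 0 1 := mem_ball_zero_iff.2 <| by
    rw [hnorm]; exact abs_tanh_lt_one u
  have hfball (u : ℝ) : ‖f (tanh u • v)‖ < 1 := mem_ball_zero_iff.1 (hmap (hball u))
  have hcurve (s t : ℝ) : kobDist M (f (tanh s • v)) (f (tanh t • v)) ≤ |s - t| :=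
    kobDist_tanh_smul hv s t ▸ hnonincr _ (hball s) _ (hball t)
  have hescape (t : ℝ) : t - (1 / 2) * log (2 * C) ≤ kobDist M 0 (f (tanh t • v)) := by
    refine sub_half_log_le_kobDist_zero (hfball t) hC ((hbdry _ (hball t)).trans ?_)
    rw [hnorm]
    exact mul_le_mul_of_nonneg_left (by linarith [le_abs_self (tanh t)]) hC.le
  have hlower := sub_sub_abs_le_kobDist hfball hcurve hescape
  have hβ := hescape 0
  simp only [tanh_zero, zero_smul] at hlower hβ
  refine ⟨?_, by linarith [hcurve s t, abs_sub_comm s t]⟩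
  rcases le_total s t with hst | hts
  · rw [abs_of_nonneg (sub_nonneg.2 hst)]
    linarith [hlower s t, abs_of_nonneg hs]
  · rw [abs_of_nonpos (sub_nonpos.2 hts), kobDist_comm (f (tanh s • v))]
    linarith [hlower t s, abs_of_nonneg ht]
end
end

section
/- Let g : ℂ^m → ℂ^M be holomorphic with g(0) = 0 and g(𝒫^m) ⊆ 𝒫^M, where 𝒫^N = {z : Im z₁ > Σ_{k≥2}|z_k|²}, and suppose g extends continuously to the closure and maps ∂𝒫^m near 0 into ∂𝒫^M. Then the Jacobian g'(0) maps the real hyperplane ℝ·(ie₁) + ℂe₂ + ⋯ + ℂe_m into ℝ·(ie₁') + ℂe₂' + ⋯ + ℂe_M', and maps ℂe₂ + ⋯ + ℂe_m into ℂe₂' + ⋯ + ℂe_M'; moreover ∂g₁/∂z₁(0) is real and positive and ∂g₁/∂z_k(0) = 0 for 2 ≤ k ≤ m. -/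
noncomputable section

/-- The Siegel upper half-space in `ℂ^{N+1}`. -/
def siegel (N : ℕ) : Set (EuclideanSpace ℂ (Fin (N+1))) :=
  {z | (z 0).im > ∑ k : Fin N, ‖z k.succ‖ ^ 2}

/-- The boundary of the Siegel upper half-space in `ℂ^{N+1}`. -/
def siegelBdry (N : ℕ) : Set (EuclideanSpace ℂ (Fin (N+1))) :=
  {z | (z 0).im = ∑ k : Fin N, ‖z k.succ‖ ^ 2}

/-!
Let `ℓ v = (g'(0) v) 0` be the first component of the Jacobian. For `Im (v 0) ≥ 0` and small
`t > 0` the parabola `t v + C t² (i e₁)` lies in `𝒫^m`, so `t ↦ Im (g (⋯) 0)` is positive for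
`t > 0` and vanishes at `0`; hence `Im (ℓ v) ≥ 0`. A `ℂ`-linear functional `ℓ` with
`Im (v 0) ≥ 0 → Im (ℓ v) ≥ 0` is a nonnegative real multiple of `v ↦ v 0`, which gives everything
except `ℓ e₁ ≠ 0`. That holds because `t ↦ g (t e₁) 0` is a holomorphic self-map of the upper
half-plane vanishing at `0`, and such a map cannot have a critical point at a boundary zero.
-/

open Set Filter Topology Complex

lemma HasDerivAt.nonneg_of_forall_lt_le {u : ℝ → ℝ} {d a : ℝ} (hu : HasDerivAt u d a)
    (hle : ∀ t, a < t → u a ≤ u t) : 0 ≤ d := by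
  have hmin : IsLocalMinOn u (Ici a) a :=
    eventually_of_mem self_mem_nhdsWithin fun t ht =>
      (eq_or_lt_of_le ht).elim (fun h => by rw [h]) (hle t)
  have hone : (1 : ℝ) ∈ posTangentConeAt (Ici a) a :=
    mem_posTangentConeAt_of_segment_subset (by
      rw [segment_eq_Icc (by linarith)]; exact Icc_subset_Ici_self)
  simpa using hmin.hasFDerivWithinAt_nonneg hu.hasDerivWithinAt.hasFDerivWithinAt hone

lemma exists_pos_ofReal_mul_of_eventually {p : ℂ → Prop} (hp : ∀ᶠ z in 𝓝 0, p z) (c : ℂ) :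
    ∃ r : ℝ, 0 < r ∧ p (r * c) := by
  have hray : Tendsto (fun r : ℝ => (r : ℂ) * c) (𝓝[>] 0) (𝓝 0) := by
    have : Continuous (fun r : ℝ => (r : ℂ) * c) := by fun_prop
    simpa using (this.tendsto 0).mono_left nhdsWithin_le_nhds
  exact ((hray.eventually hp).and self_mem_nhdsWithin).exists.imp fun r h => ⟨h.2, h.1⟩

open Real in
lemma Real.exists_sin_add_mul_neg {A : ℝ} (hA : A ∈ Ioc (-π) π) {n : ℕ} (hn : 2 ≤ n) :
    ∃ θ ∈ Ioo 0 π, Real.sin (A + n * θ) < 0 := by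
  have hn' : (2 : ℝ) ≤ n := by exact_mod_cast hn
  have hπ := Real.pi_pos
  obtain ⟨hA₁, hA₂⟩ := hA
  rcases lt_or_ge A 0 with hneg | hnonneg
  · refine ⟨-A / (2 * n), ⟨by apply div_pos <;> linarith, ?_⟩, ?_⟩
    · rw [div_lt_iff₀ (by linarith)]; nlinarith
    · rw [show A + n * (-A / (2 * n)) = A / 2 by field_simp; ring]
      exact Real.sin_neg_of_neg_of_neg_pi_lt (by linarith) (by linarith)
  · refine ⟨(3 * π / 2 - A) / n, ⟨by apply div_pos <;> linarith, ?_⟩, ?_⟩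
    · rw [div_lt_iff₀ (by linarith)]; nlinarith
    · rw [show A + n * ((3 * π / 2 - A) / n) = π + π / 2 by field_simp; ring, Real.sin_add]
      simp

lemma exists_im_pos_and_im_mul_pow_neg {b : ℂ} (hb : b ≠ 0) {n : ℕ} (hn : 2 ≤ n) :
    ∃ c : ℂ, 0 < c.im ∧ (c ^ n * b).im < 0 := by
  obtain ⟨θ, ⟨hθ₀, hθπ⟩, hsin⟩ :=
    Real.exists_sin_add_mul_neg ⟨neg_pi_lt_arg b, arg_le_pi b⟩ hn
  refine ⟨exp (θ * I), ?_, ?_⟩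
  · simpa [exp_ofReal_mul_I_im] using Real.sin_pos_of_pos_of_lt_pi hθ₀ hθπ
  have hpolar : exp (θ * I) ^ n * b = ‖b‖ * exp ((b.arg + n * θ : ℝ) * I) := by
    conv_lhs => rw [← norm_mul_exp_arg_mul_I b]
    rw [← exp_nat_mul, mul_left_comm, ← exp_add]
    push_cast; ring_nf
  rw [hpolar, im_ofReal_mul, exp_ofReal_mul_I_im]
  exact mul_neg_of_pos_of_neg (norm_pos_iff.2 hb) hsin

/-- If `F` vanished to order `n ≥ 2` at `0`, then `F z ≈ z ^ n * h 0` would send some ray into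
the upper half-plane to the lower one. -/
theorem AnalyticAt.deriv_ne_zero_of_forall_im_pos {F : ℂ → ℂ} (hF : AnalyticAt ℂ F 0)
    (h0 : F 0 = 0) (him : ∀ z : ℂ, 0 < z.im → 0 < (F z).im) : deriv F 0 ≠ 0 := by
  intro hder
  have horder : ((2 : ℕ) : ℕ∞) ≤ analyticOrderAt F 0 :=
    (natCast_le_analyticOrderAt_iff_iteratedDeriv_eq_zero hF).2 fun i hi => by
      interval_cases i <;> simp [h0, hder]
  cases hn : analyticOrderAt F 0 with
  | top =>
    obtain ⟨r, hr, hzero⟩ := exists_pos_ofReal_mul_of_eventually (analyticOrderAt_eq_top.1 hn) I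
    simpa [hzero] using him (r * I) (by simpa using hr)
  | coe n =>
    obtain ⟨h, hh, hh0, hFh⟩ := hF.analyticOrderAt_eq_natCast.1 hn
    obtain ⟨c, hc, hneg⟩ := exists_im_pos_and_im_mul_pow_neg hh0 (by simpa [hn] using horder)
    have hnear : ∀ᶠ z in 𝓝 0, (c ^ n * h z).im < 0 :=
      (continuous_im.continuousAt.comp (continuousAt_const.mul hh.continuousAt)).eventually_lt
        continuousAt_const hneg
    obtain ⟨r, hr, hrneg, hrF⟩ := exists_pos_ofReal_mul_of_eventually (hnear.and hFh) c
    have hFr : (F (r * c)).im = r ^ n * (c ^ n * h (r * c)).im := by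
      rw [hrF, sub_zero, smul_eq_mul, mul_pow, mul_assoc, ← ofReal_pow, im_ofReal_mul]
    have := him (r * c) (by simpa [im_ofReal_mul] using mul_pos hr hc)
    rw [hFr] at this
    exact (mul_neg_of_pos_of_neg (pow_pos hr n) hrneg).not_gt this

section ImNonnegTransfer

variable {E : Type*} [AddCommGroup E] [Module ℂ E] {ℓ φ : E →ₗ[ℂ] ℂ}
  (h : ∀ v, 0 ≤ (φ v).im → 0 ≤ (ℓ v).im)
include h

lemma im_eq_zero_of_im_nonneg_imp {v : E} (hv : (φ v).im = 0) : (ℓ v).im = 0 := by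
  have hneg := h (-v) (by simp [hv])
  simp only [map_neg, neg_im, Left.nonneg_neg_iff] at hneg
  exact le_antisymm hneg (h v hv.ge)

lemma re_eq_zero_of_im_nonneg_imp {v : E} (hv : (φ v).re = 0) : (ℓ v).re = 0 := by
  simpa using im_eq_zero_of_im_nonneg_imp h (v := I • v) (by simpa using hv)

lemma re_nonneg_of_im_nonneg_imp {v : E} (hv : 0 ≤ (φ v).re) : 0 ≤ (ℓ v).re := by
  simpa using h (I • v) (by simpa using hv)

lemma eq_zero_of_im_nonneg_imp {v : E} (hv : φ v = 0) : ℓ v = 0 :=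
  Complex.ext (re_eq_zero_of_im_nonneg_imp h (by simp [hv]))
    (im_eq_zero_of_im_nonneg_imp h (by simp [hv]))

end ImNonnegTransfer

lemma im_pos_of_mem_siegel {N : ℕ} {z : EuclideanSpace ℂ (Fin (N+1))} (hz : z ∈ siegel N) :
    0 < (z 0).im :=
  (Finset.sum_nonneg fun _ _ => by positivity).trans_lt hz

lemma smul_single_zero_mem_siegel {N : ℕ} {t : ℂ} (ht : 0 < t.im) :
    t • EuclideanSpace.single 0 1 ∈ siegel N := by
  simpa [siegel, PiLp.single_apply, Fin.succ_ne_zero] using ht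

lemma add_sq_smul_mem_siegel {N : ℕ} {v : EuclideanSpace ℂ (Fin (N+1))} (hv : 0 ≤ (v 0).im)
    {t : ℝ} (ht : 0 < t) :
    t • v + ((∑ k : Fin N, ‖v k.succ‖ ^ 2 + 1) * t ^ 2) • EuclideanSpace.single 0 I ∈ siegel N := by
  set S := ∑ k : Fin N, ‖v k.succ‖ ^ 2
  set w : EuclideanSpace ℂ (Fin (N+1)) := t • v + ((S + 1) * t ^ 2) • EuclideanSpace.single 0 I
  have him : (w 0).im = t * (v 0).im + (S + 1) * t ^ 2 := by
    simp [w, -ofReal_pow]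
  have hsum : ∑ k : Fin N, ‖w k.succ‖ ^ 2 = t ^ 2 * S := by
    simp [w, S, Finset.mul_sum, Fin.succ_ne_zero, mul_pow]
  change (w 0).im > ∑ k : Fin N, ‖w k.succ‖ ^ 2
  rw [him, hsum]
  nlinarith [mul_nonneg ht.le hv, pow_pos ht 2]

lemma im_fderiv_apply_zero_nonneg {m M : ℕ}
    {g : EuclideanSpace ℂ (Fin (m+1)) → EuclideanSpace ℂ (Fin (M+1))}
    (hg : DifferentiableAt ℂ g 0) (hg0 : g 0 = 0) (hmap : MapsTo g (siegel m) (siegel M))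
    {v : EuclideanSpace ℂ (Fin (m+1))} (hv : 0 ≤ (v 0).im) : 0 ≤ (fderiv ℂ g 0 v 0).im := by
  set C := ∑ k : Fin m, ‖v k.succ‖ ^ 2 + 1
  set γ : ℝ → EuclideanSpace ℂ (Fin (m+1)) :=
    fun t => t • v + (C * t ^ 2) • EuclideanSpace.single 0 I
  have hγ0 : γ 0 = 0 := by simp [γ]
  have hγ : HasDerivAt γ v 0 := by
    have hsq : HasDerivAt (fun t : ℝ => C * t ^ 2) (C * (2 * 0 ^ 1)) 0 :=
      (hasDerivAt_pow 2 (0 : ℝ)).const_mul C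
    have h := ((hasDerivAt_id (0 : ℝ)).smul_const v).add
      (hsq.smul_const (EuclideanSpace.single 0 I))
    simp only [one_smul, pow_one, mul_zero, zero_smul, add_zero] at h
    exact h
  have hgγ : HasDerivAt (fun t => g (γ t)) (fderiv ℂ g 0 v) 0 := by
    have hg' : HasFDerivAt g (fderiv ℂ g 0) (γ 0) := hγ0 ▸ hg.hasFDerivAt
    exact (hg'.restrictScalars ℝ).comp_hasDerivAt 0 hγ
  have hu : HasDerivAt (fun t => (g (γ t) 0).im) (fderiv ℂ g 0 v 0).im 0 := by
    have h := imCLM.hasFDerivAt.comp_hasDerivAt 0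
      (((EuclideanSpace.proj 0).restrictScalars ℝ).hasFDerivAt.comp_hasDerivAt 0 hgγ)
    exact h
  refine hu.nonneg_of_forall_lt_le fun t ht => ?_
  rw [hγ0, hg0]
  exact (im_pos_of_mem_siegel (hmap (add_sq_smul_mem_siegel hv ht))).le

lemma fderiv_apply_single_zero_ne_zero {m M : ℕ}
    {g : EuclideanSpace ℂ (Fin (m+1)) → EuclideanSpace ℂ (Fin (M+1))}
    (hg : Differentiable ℂ g) (hg0 : g 0 = 0) (hmap : MapsTo g (siegel m) (siegel M)) :
    fderiv ℂ g 0 (EuclideanSpace.single 0 1) 0 ≠ 0 := by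
  set e₁ : EuclideanSpace ℂ (Fin (m+1)) := EuclideanSpace.single 0 1
  set F : ℂ → ℂ := fun t => EuclideanSpace.proj 0 (g (t • e₁))
  have hline : HasDerivAt (fun t : ℂ => t • e₁) e₁ 0 := by
    simpa using (hasDerivAt_id (0 : ℂ)).smul_const e₁
  have hg' : HasFDerivAt g (fderiv ℂ g 0) ((0 : ℂ) • e₁) :=
    (zero_smul ℂ e₁).symm ▸ (hg 0).hasFDerivAt
  have hF : HasDerivAt F (fderiv ℂ g 0 e₁ 0) 0 := by
    exact (EuclideanSpace.proj 0).hasFDerivAt.comp_hasDerivAt 0 (hg'.comp_hasDerivAt 0 hline)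
  have hFan : AnalyticAt ℂ F 0 := by
    exact ((EuclideanSpace.proj 0).differentiable.comp
      (hg.comp (differentiable_id.smul_const e₁))).analyticAt 0
  rw [← hF.deriv]
  refine hFan.deriv_ne_zero_of_forall_im_pos (by simp [F, hg0]) fun t ht => ?_
  exact im_pos_of_mem_siegel (hmap (smul_single_zero_mem_siegel ht))

theorem stmt_12_general (m M : ℕ)
    (g : EuclideanSpace ℂ (Fin (m+1)) → EuclideanSpace ℂ (Fin (M+1)))
    (hol : Differentiable ℂ g) (hg0 : g 0 = 0)
    (hmap : Set.MapsTo g (siegel m) (siegel M)) :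
    (∀ z : EuclideanSpace ℂ (Fin (m+1)), (z 0).re = 0 →
      ((fderiv ℂ g 0 z) 0).re = 0) ∧
    (∀ z : EuclideanSpace ℂ (Fin (m+1)), z 0 = 0 → (fderiv ℂ g 0 z) 0 = 0) ∧
    (((fderiv ℂ g 0 (EuclideanSpace.single 0 1)) 0).im = 0 ∧
      0 < ((fderiv ℂ g 0 (EuclideanSpace.single 0 1)) 0).re) ∧
    (∀ k : Fin m, (fderiv ℂ g 0 (EuclideanSpace.single k.succ 1)) 0 = 0) := by
  set φ : EuclideanSpace ℂ (Fin (m+1)) →ₗ[ℂ] ℂ := (EuclideanSpace.proj 0).toLinearMap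
  set ℓ : EuclideanSpace ℂ (Fin (m+1)) →ₗ[ℂ] ℂ :=
    (EuclideanSpace.proj (0 : Fin (M+1)) ∘L fderiv ℂ g 0).toLinearMap
  have hℓ : ∀ v, 0 ≤ (φ v).im → 0 ≤ (ℓ v).im := fun _ =>
    im_fderiv_apply_zero_nonneg (hol 0) hg0 hmap
  have him : (ℓ (EuclideanSpace.single 0 1)).im = 0 :=
    im_eq_zero_of_im_nonneg_imp hℓ (by simp [φ])
  have hre : 0 ≤ (ℓ (EuclideanSpace.single 0 1)).re :=
    re_nonneg_of_im_nonneg_imp hℓ (by simp [φ])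
  have hne := fderiv_apply_single_zero_ne_zero hol hg0 hmap
  refine ⟨fun _ => re_eq_zero_of_im_nonneg_imp hℓ, fun _ => eq_zero_of_im_nonneg_imp hℓ,
    ⟨him, hre.lt_of_ne fun h => hne (Complex.ext h.symm him)⟩, fun k => ?_⟩
  exact eq_zero_of_im_nonneg_imp hℓ (by simp [φ, Fin.succ_ne_zero])

theorem stmt_12 (m M : ℕ)
    (g : EuclideanSpace ℂ (Fin (m+1)) → EuclideanSpace ℂ (Fin (M+1)))
    (hol : Differentiable ℂ g) (hg0 : g 0 = 0)
    (hmap : Set.MapsTo g (siegel m) (siegel M))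
    (hbdry : ∃ ε > 0, ∀ z ∈ Metric.ball (0 : EuclideanSpace ℂ (Fin (m+1))) ε ∩ siegelBdry m,
      g z ∈ siegelBdry M) :
    (∀ z : EuclideanSpace ℂ (Fin (m+1)), (z 0).re = 0 →
      ((fderiv ℂ g 0 z) 0).re = 0) ∧
    (∀ z : EuclideanSpace ℂ (Fin (m+1)), z 0 = 0 → (fderiv ℂ g 0 z) 0 = 0) ∧
    (((fderiv ℂ g 0 (EuclideanSpace.single 0 1)) 0).im = 0 ∧
      0 < ((fderiv ℂ g 0 (EuclideanSpace.single 0 1)) 0).re) ∧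
    (∀ k : Fin m, (fderiv ℂ g 0 (EuclideanSpace.single k.succ 1)) 0 = 0) :=
  stmt_12_general m M g hol hg0 hmap
end
end
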